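/- (Twisted Laplacian as divergence form operator) For φ with ∂_z φ > 0, define the matrix E = (1/∂_z φ) P P^T where P is the 3×3 matrix whose rows are (∂_z φ, 0, 0), (0, ∂_z φ, 0), (−∂_1 φ, −∂_2 φ, 1). Then for smooth f: Δ^φ f := Σ_i (∂_i^φ)² f = (1/∂_z φ) ∇·(E ∇f), and similarly ∇^φ · v = (1/∂_z φ) ∇·(P v) and ∇^φ f = (1/∂_z φ) P^T ∇f. -/

import Mathlib

/- STATEMENT 14: the twisted Laplacian as a divergence form operator:
   Δ^φ f = (1/∂_zφ) ∇·(E ∇f) with E = (1/∂_zφ) P Pᵀ, and similarly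
   ∇^φ·v = (1/∂_zφ) ∇·(P v) and ∇^φ f = (1/∂_zφ) Pᵀ ∇f. -/

open MeasureTheory

noncomputable section

/-- Points of ℝ³, written as ((x,y),z). -/
abbrev Pt := (ℝ × ℝ) × ℝ

/-- The lower half space S = {z < 0}. -/
def Sset : Set Pt := {p | p.2 < 0}

/-- The standard basis directions of ℝ³. -/
def e3 : Fin 3 → Pt := ![((1, 0), 0), ((0, 1), 0), ((0, 0), 1)]

/-- Partial derivative in the i-th coordinate direction. -/
def pd (i : Fin 3) (f : Pt → ℝ) (p : Pt) : ℝ := fderiv ℝ f p (e3 i)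

/-- The twisted ("straightened") derivatives: ∂_i^φ = ∂_i − (∂_iφ/∂_zφ)∂_z for i = 1,2,
and ∂_3^φ = (1/∂_zφ) ∂_z. -/
def Dphi (φ : Pt → ℝ) (i : Fin 3) (f : Pt → ℝ) (p : Pt) : ℝ :=
  if i = 2 then pd 2 f p / pd 2 φ p
  else pd i f p - (pd i φ p / pd 2 φ p) * pd 2 f p

/-- The matrix P with rows (∂_zφ, 0, 0), (0, ∂_zφ, 0), (−∂₁φ, −∂₂φ, 1). -/
def Pm (φ : Pt → ℝ) (i j : Fin 3) (p : Pt) : ℝ :=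
  if i = 2 then (if j = 2 then 1 else -pd j φ p)
  else (if j = i then pd 2 φ p else 0)

/-- The symmetric matrix E = (1/∂_zφ) P Pᵀ. -/
def Em (φ : Pt → ℝ) (i j : Fin 3) (p : Pt) : ℝ :=
  (∑ k, Pm φ i k p * Pm φ j k p) / pd 2 φ p


lemma pd_contDiff {f : Pt → ℝ} (hf : ContDiff ℝ (⊤ : ℕ∞) f) (i : Fin 3) :
    ContDiff ℝ (⊤ : ℕ∞) (pd i f) := by
  have h1 : ContDiff ℝ (⊤ : ℕ∞) (fderiv ℝ f) := hf.fderiv_right (by simp)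
  exact h1.clm_apply contDiff_const

lemma pd_add {a b : Pt → ℝ} (i : Fin 3) (p : Pt)
    (ha : DifferentiableAt ℝ a p) (hb : DifferentiableAt ℝ b p) :
    pd i (fun q => a q + b q) p = pd i a p + pd i b p := by
  unfold pd; rw [fderiv_fun_add ha hb]; simp

lemma pd_neg (a : Pt → ℝ) (i : Fin 3) (p : Pt) :
    pd i (fun q => -(a q)) p = -pd i a p := by
  unfold pd; rw [fderiv_fun_neg]; simp

lemma pd_mul {a b : Pt → ℝ} (i : Fin 3) (p : Pt)
    (ha : DifferentiableAt ℝ a p) (hb : DifferentiableAt ℝ b p) :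
    pd i (fun q => a q * b q) p = pd i a p * b p + a p * pd i b p := by
  unfold pd; rw [fderiv_fun_mul ha hb]; simp; ring

lemma pd_comm {φ : Pt → ℝ} (hφ : ContDiff ℝ (⊤ : ℕ∞) φ) (i j : Fin 3) (p : Pt) :
    pd i (pd j φ) p = pd j (pd i φ) p := by
  have hsym : IsSymmSndFDerivAt ℝ φ p := hφ.contDiffAt.isSymmSndFDerivAt (by rw [minSmoothness_of_isRCLikeNormedField]; exact (WithTop.coe_le_coe.2 (le_top : (2 : ℕ∞) ≤ ⊤)))
  have hdc : DifferentiableAt ℝ (fderiv ℝ φ) p :=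
    ((hφ.fderiv_right (m := (⊤ : ℕ∞)) (by simp)).differentiable (by simp)) p
  have key : ∀ (k l : Fin 3), pd k (pd l φ) p = fderiv ℝ (fderiv ℝ φ) p (e3 k) (e3 l) := by
    intro k l
    unfold pd
    rw [fderiv_clm_apply hdc (differentiableAt_const _)]
    simp
  rw [key, key, hsym.eq]

lemma part3 (φ f : Pt → ℝ) (p : Pt) (hψ : pd 2 φ p ≠ 0) (i : Fin 3) :
    Dphi φ i f p = (1 / pd 2 φ p) * ∑ j, Pm φ j i p * pd j f p := by
  fin_cases i <;>
    simp [Dphi, Pm, Fin.sum_univ_three] <;> field_simp <;> ring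

lemma div_form (φ : Pt → ℝ) (v : Fin 3 → Pt → ℝ) (hφ : ContDiff ℝ (⊤ : ℕ∞) φ)
    (hv : ∀ i, ContDiff ℝ (⊤ : ℕ∞) (v i)) (p : Pt) (hψ : pd 2 φ p ≠ 0) :
    (∑ i, Dphi φ i (v i) p) =
      (1 / pd 2 φ p) * ∑ i, pd i (fun q => ∑ j, Pm φ i j q * v j q) p := by
  have hpφ : ∀ (j : Fin 3) (q : Pt), DifferentiableAt ℝ (pd j φ) q :=
    fun j q => ((pd_contDiff hφ j).differentiable (by simp)) q
  have hvd : ∀ (i : Fin 3) (q : Pt), DifferentiableAt ℝ (v i) q :=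
    fun i q => ((hv i).differentiable (by simp)) q
  have g0 : (fun q => ∑ j, Pm φ 0 j q * v j q) = fun q => pd 2 φ q * v 0 q := by
    funext q; simp [Pm, Fin.sum_univ_three]
  have g1 : (fun q => ∑ j, Pm φ 1 j q * v j q) = fun q => pd 2 φ q * v 1 q := by
    funext q; simp [Pm, Fin.sum_univ_three]
  have g2 : (fun q => ∑ j, Pm φ 2 j q * v j q)
      = fun q => -(pd 0 φ q * v 0 q) + (-(pd 1 φ q * v 1 q) + v 2 q) := by
    funext q; simp [Pm, Fin.sum_univ_three]; ring
  rw [Fin.sum_univ_three, Fin.sum_univ_three, g0, g1, g2]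
  rw [pd_mul 0 p (hpφ 2 p) (hvd 0 p), pd_mul 1 p (hpφ 2 p) (hvd 1 p)]
  rw [pd_add (a := fun q => -(pd 0 φ q * v 0 q)) (b := fun q => -(pd 1 φ q * v 1 q) + v 2 q) 2 p (((hpφ 0 p).mul (hvd 0 p)).neg)
      ((((hpφ 1 p).mul (hvd 1 p)).neg).add (hvd 2 p)),
    pd_add (a := fun q => -(pd 1 φ q * v 1 q)) (b := v 2) 2 p (((hpφ 1 p).mul (hvd 1 p)).neg) (hvd 2 p),
    pd_neg _ 2 p, pd_neg _ 2 p,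
    pd_mul 2 p (hpφ 0 p) (hvd 0 p), pd_mul 2 p (hpφ 1 p) (hvd 1 p)]
  rw [pd_comm hφ 0 2 p, pd_comm hφ 1 2 p]
  have h0 : ((0:Fin 3) = 2) = False := by decide
  have h1 : ((1:Fin 3) = 2) = False := by decide
  simp only [Dphi, h0, h1, if_false, if_pos rfl, if_true]
  field_simp
  ring

lemma key_rw (φ f : Pt → ℝ) (hφz : ∀ q : Pt, 0 < pd 2 φ q) (i : Fin 3) (q : Pt) :
    ∑ j, Em φ i j q * pd j f q = ∑ j, Pm φ i j q * Dphi φ j f q := by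
  have hψ : pd 2 φ q ≠ 0 := (hφz q).ne'
  simp only [part3 φ f q hψ, Em, Fin.sum_univ_three]
  field_simp
  ring

/-- The twisted Laplacian, divergence and gradient as divergence-form expressions. -/
theorem twisted_laplacian_divergence_form
    (φ f : Pt → ℝ) (v : Fin 3 → Pt → ℝ)
    (hφ : ContDiff ℝ (⊤ : ℕ∞) φ) (hf : ContDiff ℝ (⊤ : ℕ∞) f) (hv : ∀ i, ContDiff ℝ (⊤ : ℕ∞) (v i))
    (hφz : ∀ p : Pt, 0 < pd 2 φ p) (p : Pt) :
    (∑ i, Dphi φ i (Dphi φ i f) p) =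
        (1 / pd 2 φ p) * ∑ i, pd i (fun q => ∑ j, Em φ i j q * pd j f q) p ∧
    (∑ i, Dphi φ i (v i) p) =
        (1 / pd 2 φ p) * ∑ i, pd i (fun q => ∑ j, Pm φ i j q * v j q) p ∧
    ∀ i, Dphi φ i f p = (1 / pd 2 φ p) * ∑ j, Pm φ j i p * pd j f p := by
  refine ⟨?_, div_form φ v hφ hv p (hφz p).ne', fun i => part3 φ f p (hφz p).ne' i⟩
  have hD : ∀ i : Fin 3, ContDiff ℝ (⊤ : ℕ∞) (Dphi φ i f) := by
    intro i
    rcases eq_or_ne i 2 with h | h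
    · have e : Dphi φ i f = fun q => pd 2 f q / pd 2 φ q := by
        funext q; simp [Dphi, h]
      rw [e]
      exact (pd_contDiff hf 2).div (pd_contDiff hφ 2) fun q => (hφz q).ne'
    · have e : Dphi φ i f = fun q => pd i f q - (pd i φ q / pd 2 φ q) * pd 2 f q := by
        funext q; simp [Dphi, h]
      rw [e]
      exact (pd_contDiff hf i).sub
        (((pd_contDiff hφ i).div (pd_contDiff hφ 2) fun q => (hφz q).ne').mul
          (pd_contDiff hf 2))
  have hrw : ∀ i : Fin 3, (fun q => ∑ j, Em φ i j q * pd j f q)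
      = fun q => ∑ j, Pm φ i j q * Dphi φ j f q :=
    fun i => funext fun q => key_rw φ f hφz i q
  have h2 := div_form φ (fun i => Dphi φ i f) hφ hD p (hφz p).ne'
  simpa only [hrw] using h2
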